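/- (The rank count test and the conservative rank envelope test can differ only at the critical rank.) Let α with 0 ≤ α < 1 be such that m = α(s+1) is an integer, and let k_α = max{k ≥ 1 : #{i : R_i < k} ≤ m}, which is well defined since α < 1. If #{i ∈ {1, …, s+1} : N_i ≼ N_1} ≤ m (the rank count test rejects) but #{i ∈ {1, …, s+1} : R_i ≤ R_1} > m (the conservative rank envelope test does not reject), then R_1 = k_α, where N_i ≼ N_1 means ¬(N_1 ≺ N_i). -/

import Mathlib

/-!
The first nonzero entry of the rank count vector `N_i` sits at index `R_i`. Hence every `j` with
`R_j < R_1` satisfies `N_j ≼ N_1`, so rejection by the rank count test forces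
`#{i : R_i < R_1} ≤ m`; non-rejection by the envelope test says `#{i : R_i < R_1 + 1} > m`.
Since `k ↦ #{i : R_i < k}` is monotone, these two facts make `R_1` the largest `k ≥ 1`
with `#{i : R_i < k} ≤ m`, i.e. `R_1 = k_α`.
-/

open Finset

/-- The upward pointwise rank `R_i^↑(r) = #{j : T_j(r) ≤ T_i(r)}`. -/
noncomputable def upRank {s : ℕ} {ι : Type*} (T : Fin (s + 1) → ι → ℝ) (i : Fin (s + 1)) (r : ι) : ℕ :=
  {j : Fin (s + 1) | T j r ≤ T i r}.ncard

/-- The downward pointwise rank `R_i^↓(r) = #{j : T_j(r) ≥ T_i(r)}`. -/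
noncomputable def downRank {s : ℕ} {ι : Type*} (T : Fin (s + 1) → ι → ℝ) (i : Fin (s + 1)) (r : ι) : ℕ :=
  {j : Fin (s + 1) | T i r ≤ T j r}.ncard

/-- The two-sided pointwise rank `R_i^*(r) = min(R_i^↑(r), R_i^↓(r))`. -/
noncomputable def twoSidedRank {s : ℕ} {ι : Type*} (T : Fin (s + 1) → ι → ℝ) (i : Fin (s + 1)) (r : ι) : ℕ :=
  min (upRank T i r) (downRank T i r)

/-- The extreme rank `R_i = min_{r ∈ I} R_i^*(r)`. -/
noncomputable def extremeRank {s : ℕ} {ι : Type*} [Fintype ι] [Nonempty ι]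
    (T : Fin (s + 1) → ι → ℝ) (i : Fin (s + 1)) : ℕ :=
  univ.inf' univ_nonempty (fun r => twoSidedRank T i r)

/-- The rank count `N_{i,k} = #{r ∈ I : R_i^*(r) = k}`. -/
noncomputable def rankCount {s : ℕ} {ι : Type*} [Fintype ι]
    (T : Fin (s + 1) → ι → ℝ) (i : Fin (s + 1)) (k : ℕ) : ℕ :=
  {r : ι | twoSidedRank T i r = k}.ncard

/-- The reverse lexical strict order on rank count vectors
`N_i = (N_{i,1}, …, N_{i,K})`, `K = ⌊(s+2)/2⌋`: `N_i ≺ N_j` iff there exists `n ≤ K`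
with `N_{i,k} = N_{j,k}` for all `k < n` and `N_{i,n} > N_{j,n}`. -/
def rankCountLT {s : ℕ} {ι : Type*} [Fintype ι]
    (T : Fin (s + 1) → ι → ℝ) (i j : Fin (s + 1)) : Prop :=
  ∃ n : ℕ, 1 ≤ n ∧ n ≤ (s + 2) / 2 ∧
    (∀ k, 1 ≤ k → k < n → rankCount T i k = rankCount T j k) ∧
    rankCount T j n < rankCount T i n

theorem sSup_setOf_ncard_lt_le_eq {α : Type*} [Finite α] (f : α → ℕ) (a : α) (m : ℕ)
    (ha : 1 ≤ f a) (hlt : {i | f i < f a}.ncard ≤ m) (hle : m < {i | f i ≤ f a}.ncard) :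
    sSup {k : ℕ | 1 ≤ k ∧ {i | f i < k}.ncard ≤ m} = f a := by
  refine IsGreatest.csSup_eq ⟨⟨ha, hlt⟩, fun k ⟨_, hk⟩ => ?_⟩
  by_contra! hak
  have hsub : {i | f i ≤ f a} ⊆ {i | f i < k} := fun i hi => lt_of_le_of_lt hi hak
  exact (hle.trans_le ((Set.ncard_le_ncard hsub (Set.toFinite _)).trans hk)).false

section ExtremeRank

variable {s : ℕ} {ι : Type*} (T : Fin (s + 1) → ι → ℝ)

theorem one_le_twoSidedRank (i : Fin (s + 1)) (r : ι) : 1 ≤ twoSidedRank T i r := by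
  have hup : 0 < upRank T i r := (Set.ncard_pos (Set.toFinite _)).mpr ⟨i, le_refl (T i r)⟩
  have hdown : 0 < downRank T i r := (Set.ncard_pos (Set.toFinite _)).mpr ⟨i, le_refl (T i r)⟩
  exact le_min hup hdown

variable [Fintype ι] [Nonempty ι]

theorem one_le_extremeRank (i : Fin (s + 1)) : 1 ≤ extremeRank T i :=
  le_inf' _ _ fun r _ => one_le_twoSidedRank T i r

theorem extremeRank_le_of_rankCount_pos {i : Fin (s + 1)} {k : ℕ} (h : 0 < rankCount T i k) :
    extremeRank T i ≤ k := by
  obtain ⟨r, hr⟩ := (Set.ncard_pos (Set.toFinite _)).mp h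
  exact (inf'_le _ (mem_univ r)).trans_eq hr

theorem rankCount_extremeRank_pos (i : Fin (s + 1)) : 0 < rankCount T i (extremeRank T i) := by
  obtain ⟨r, -, hr⟩ := exists_mem_eq_inf' univ_nonempty (fun r => twoSidedRank T i r)
  exact (Set.ncard_pos (Set.toFinite _)).mpr ⟨r, hr.symm⟩

theorem not_rankCountLT_of_extremeRank_lt {i j : Fin (s + 1)}
    (h : extremeRank T j < extremeRank T i) : ¬ rankCountLT T i j := by
  rintro ⟨n, -, -, heq, hlt⟩
  rcases lt_or_ge (extremeRank T j) n with hjn | hnj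
  · have hpos : 0 < rankCount T i (extremeRank T j) := by
      rw [heq _ (one_le_extremeRank T j) hjn]
      exact rankCount_extremeRank_pos T j
    exact (extremeRank_le_of_rankCount_pos T hpos).not_gt h
  · exact (extremeRank_le_of_rankCount_pos T (Nat.zero_lt_of_lt hlt)).not_gt (hnj.trans_lt h)

end ExtremeRank

theorem rankCount_envelope_differ_only_at_critical_general
    {s : ℕ} {ι : Type*} [Fintype ι] [Nonempty ι]
    (T : Fin (s + 1) → ι → ℝ)
    (m : ℕ)
    (kα : ℕ)
    (hkα : kα = sSup {k : ℕ | 1 ≤ k ∧ {i : Fin (s + 1) | extremeRank T i < k}.ncard ≤ m})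
    (hN : {i : Fin (s + 1) | ¬ rankCountLT T 0 i}.ncard ≤ m)
    (hR : m < {i : Fin (s + 1) | extremeRank T i ≤ extremeRank T 0}.ncard) :
    extremeRank T 0 = kα := by
  have hlower : {i | extremeRank T i < extremeRank T 0} ⊆ {i | ¬ rankCountLT T 0 i} :=
    fun _ hi => not_rankCountLT_of_extremeRank_lt T hi
  rw [hkα, sSup_setOf_ncard_lt_le_eq _ _ m (one_le_extremeRank T 0)
    ((Set.ncard_le_ncard hlower (Set.toFinite _)).trans hN) hR]

/-- **The rank count test and the conservative rank envelope test can differ only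
at the critical rank.** Let `0 ≤ α < 1` be such that `m = α(s+1)` is an integer and let
`k_α = max{k ≥ 1 : #{i : R_i < k} ≤ m}`. If `#{i : N_i ≼ N_1} ≤ m` (the rank count test
rejects) but `#{i : R_i ≤ R_1} > m` (the conservative rank envelope test does not
reject), then `R_1 = k_α`, where `N_i ≼ N_1` means `¬(N_1 ≺ N_i)`. -/
theorem rankCount_envelope_differ_only_at_critical
    {s : ℕ} (hs : 1 ≤ s) {ι : Type*} [Fintype ι] [Nonempty ι]
    (T : Fin (s + 1) → ι → ℝ)
    (hnoties : ∀ r : ι, ∀ i j : Fin (s + 1), i ≠ j → T i r ≠ T j r)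
    (α : ℝ) (hα0 : 0 ≤ α) (hα1 : α < 1)
    (m : ℕ) (hm : (m : ℝ) = α * (s + 1))
    (kα : ℕ)
    (hkα : kα = sSup {k : ℕ | 1 ≤ k ∧ {i : Fin (s + 1) | extremeRank T i < k}.ncard ≤ m})
    (hN : {i : Fin (s + 1) | ¬ rankCountLT T 0 i}.ncard ≤ m)
    (hR : m < {i : Fin (s + 1) | extremeRank T i ≤ extremeRank T 0}.ncard) :
    extremeRank T 0 = kα :=
  rankCount_envelope_differ_only_at_critical_general T m kα hkα hN hR
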